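/- arXiv:2605.02786 — 5 statements merged into one kernel-verified Lean document; each statement's English description precedes it below -/
import Mathlib

section
/- For all integers m ≥ 2, r ≥ 1 and k ≥ 0, the number of NE lattice paths from (0,0) to ((m-1)k + r - 1, k) that stay weakly below the line y = x/(m-1) equals the Raney number R_{m,r}(k); equivalently, (mk + r) times this number of paths equals r · C(mk + r, k). -/
/-- A NE lattice path from `(0,0)` to `(a,b)`: a finite sequence of `a+b+1` lattice
points in `ℤ²` starting at `(0,0)`, ending at `(a,b)`, where each consecutive
difference is `E = (1,0)` or `N = (0,1)`. -/
def IsNEPath (a b : ℕ) (p : Fin (a + b + 1) → ℤ × ℤ) : Prop :=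
  p 0 = (0, 0) ∧ p (Fin.last (a + b)) = ((a : ℤ), (b : ℤ)) ∧
    ∀ i : Fin (a + b), p i.succ - p i.castSucc = (1, 0) ∨ p i.succ - p i.castSucc = (0, 1)

/-- The number of NE lattice paths from `(0,0)` to `(a,b)` that stay weakly below the
line `y = x / s`, i.e. every point `(x, y)` on the path satisfies `s * y ≤ x`. -/
noncomputable def pathCountBelow (a b s : ℕ) : ℕ :=
  Nat.card {p : Fin (a + b + 1) → ℤ × ℤ //
    IsNEPath a b p ∧ ∀ i, (s : ℤ) * (p i).2 ≤ (p i).1}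

/-!
Deleting the last step of a path that stays below `y = x/s` and ends at `(a+1, b+1)` leaves
such a path ending at `(a, b+1)` or at `(a+1, b)`, so the counts `N(a, b)` satisfy Pascal's
recursion inside the region `s b ≤ a` and vanish outside it. The ballot-type formula
`(a+1) N(a, b) = (a+1-sb) C(a+b, b)` satisfies the same recursion (the absorption identity
`(b+1) C(a+b+1, b+1) = (a+1) C(a+b+1, b)` absorbs the linear factors), hence holds everywhere.
Multiplying by `a+b+1` and taking `s = m-1`, `a = (m-1)k + r - 1`, `b = k` gives the Raney number.
-/
def belowPaths (s n : ℕ) (q : ℤ × ℤ) : Set (Fin (n + 1) → ℤ × ℤ) :=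
  {p | (p 0 = 0 ∧ p (Fin.last n) = q ∧
    ∀ i : Fin n, p i.succ - p i.castSucc = (1, 0) ∨ p i.succ - p i.castSucc = (0, 1)) ∧
    ∀ i, (s : ℤ) * (p i).2 ≤ (p i).1}

lemma pathCountBelow_eq_ncard (a b s : ℕ) :
    pathCountBelow a b s = (belowPaths s (a + b) (a, b)).ncard := by
  rw [← Nat.card_coe_set_eq]
  rfl

section
variable {s n : ℕ} {q : ℤ × ℤ}

lemma coords_of_mem_belowPaths {p : Fin (n + 1) → ℤ × ℤ} (hp : p ∈ belowPaths s n q)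
    (i : Fin (n + 1)) : 0 ≤ (p i).1 ∧ 0 ≤ (p i).2 ∧ (p i).1 + (p i).2 = i := by
  obtain ⟨⟨h0, -, hstep⟩, -⟩ := hp
  induction i using Fin.induction with
  | zero => simp [h0]
  | succ i ih =>
    simp only [Fin.val_castSucc] at ih
    rcases hstep i with h | h <;> rw [sub_eq_iff_eq_add] at h <;>
      simp only [h, Prod.fst_add, Prod.snd_add, Fin.val_succ] <;> push_cast <;> omega

lemma belowPaths_finite : (belowPaths s n q).Finite := by
  refine (Set.Finite.pi fun _ => Set.finite_Icc (0 : ℤ × ℤ) (n, n)).subset fun p hp i _ => ?_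
  obtain ⟨hx, hy, hsum⟩ := coords_of_mem_belowPaths hp i
  have := i.is_le
  exact ⟨⟨hx, hy⟩, ⟨by omega, by omega⟩⟩

lemma belowPaths_eq_empty_of_snd_neg (hq : q.2 < 0) : belowPaths s n q = ∅ := by
  refine Set.eq_empty_of_forall_notMem fun p hp => ?_
  have := (coords_of_mem_belowPaths hp (Fin.last n)).2.1
  rw [hp.1.2.1] at this
  omega

lemma belowPaths_eq_empty_of_lt (hq : q.1 < s * q.2) : belowPaths s n q = ∅ := by
  refine Set.eq_empty_of_forall_notMem fun p hp => ?_
  have := hp.2 (Fin.last n)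
  rw [hp.1.2.1] at this
  omega

lemma snoc_mem_belowPaths_iff {p : Fin (n + 1) → ℤ × ℤ} {x : ℤ × ℤ} :
    Fin.snoc p x ∈ belowPaths s (n + 1) q ↔
      x = q ∧ s * x.2 ≤ x.1 ∧
        (p ∈ belowPaths s n (x - (1, 0)) ∨ p ∈ belowPaths s n (x - (0, 1))) := by
  have h0 : (Fin.snoc p x : Fin (n + 2) → ℤ × ℤ) 0 = p 0 := rfl
  simp only [belowPaths, Set.mem_ofPred_eq, Fin.forall_fin_succ' (n := n),
    Fin.forall_fin_succ' (n := n + 1), h0, Fin.snoc_last, Fin.snoc_castSucc, Fin.succ_castSucc,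
    Fin.succ_last]
  grind

lemma belowPaths_succ (hq : s * q.2 ≤ q.1) :
    belowPaths s (n + 1) q =
      (Fin.snoc · q) '' (belowPaths s n (q - (1, 0)) ∪ belowPaths s n (q - (0, 1))) := by
  ext p
  obtain ⟨p, x, rfl⟩ : ∃ p' x, p = Fin.snoc p' x := ⟨_, _, (Fin.snoc_init_self p).symm⟩
  rw [snoc_mem_belowPaths_iff]
  constructor
  · rintro ⟨rfl, -, hp⟩
    exact ⟨p, hp, rfl⟩
  · rintro ⟨p', hp', he⟩
    obtain ⟨rfl, rfl⟩ := Fin.snoc_injective2 he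
    exact ⟨rfl, hq, hp'⟩

lemma ncard_belowPaths_succ (hq : s * q.2 ≤ q.1) :
    (belowPaths s (n + 1) q).ncard =
      (belowPaths s n (q - (1, 0))).ncard + (belowPaths s n (q - (0, 1))).ncard := by
  have hdisj : Disjoint (belowPaths s n (q - (1, 0))) (belowPaths s n (q - (0, 1))) :=
    Set.disjoint_left.2 fun p hE hN => by
      have := hE.1.2.1.symm.trans hN.1.2.1
      simp [Prod.ext_iff] at this
  rw [belowPaths_succ hq,
    Set.ncard_image_of_injective _ (Fin.snoc_left_injective (α := fun _ => ℤ × ℤ) q),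
    Set.ncard_union_eq hdisj belowPaths_finite belowPaths_finite]

end

lemma pathCountBelow_zero_right (a s : ℕ) : pathCountBelow a 0 s = 1 := by
  induction a with
  | zero =>
    rw [pathCountBelow_eq_ncard, Set.ncard_eq_one]
    refine ⟨0, Set.eq_singleton_iff_unique_mem.2
      ⟨by simp [belowPaths, Prod.ext_iff], fun p hp => ?_⟩⟩
    funext i
    rw [Fin.fin_one_eq_zero i, hp.1.1]
    rfl
  | succ a ih =>
    rw [pathCountBelow_eq_ncard] at ih ⊢
    rw [ncard_belowPaths_succ (by simp; omega)]
    simp only [Prod.mk_sub_mk, Nat.cast_zero, sub_zero, zero_sub, Nat.cast_add_one,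
      add_sub_cancel_right]
    rw [belowPaths_eq_empty_of_snd_neg (q := ((a : ℤ) + 1, -1)) (by norm_num), Set.ncard_empty,
      add_zero]
    simpa using ih

lemma pathCountBelow_eq_zero_of_lt {a b s : ℕ} (h : a < s * b) : pathCountBelow a b s = 0 := by
  rw [pathCountBelow_eq_ncard,
    belowPaths_eq_empty_of_lt (show (a : ℤ) < s * b by exact_mod_cast h), Set.ncard_empty]

lemma pathCountBelow_succ_succ {a b s : ℕ} (h : s * (b + 1) ≤ a + 1) :
    pathCountBelow (a + 1) (b + 1) s = pathCountBelow a (b + 1) s + pathCountBelow (a + 1) b s := by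
  simp only [pathCountBelow_eq_ncard]
  rw [show a + 1 + (b + 1) = a + (b + 1) + 1 by omega,
    ncard_belowPaths_succ (by push_cast; exact_mod_cast h), show a + (b + 1) = a + 1 + b by omega]
  congr 3 <;> simp

-- For `a < s * b` both sides vanish, the right one through truncated subtraction.
theorem add_one_mul_pathCountBelow {s : ℕ} (hs : 0 < s) (a b : ℕ) :
    (a + 1) * pathCountBelow a b s = (a + 1 - s * b) * (a + b).choose b := by
  induction b generalizing a with
  | zero => simp [pathCountBelow_zero_right]
  | succ b ihb =>
    induction a with
    | zero =>
      rw [pathCountBelow_eq_zero_of_lt (by positivity), Nat.sub_eq_zero_of_le (by nlinarith)]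
      simp
    | succ a iha =>
      rcases lt_or_ge (a + 1) (s * (b + 1)) with hlt | hle
      · rw [pathCountBelow_eq_zero_of_lt hlt, Nat.sub_eq_zero_of_le hlt]
        simp
      have hpascal : (a + 1 + (b + 1)).choose (b + 1) =
          (a + b + 1).choose b + (a + b + 1).choose (b + 1) := by
        rw [show a + 1 + (b + 1) = a + b + 1 + 1 by omega, Nat.choose_succ_succ]
      have habsorb : (a + b + 1).choose (b + 1) * (b + 1) = (a + b + 1).choose b * (a + 1) := by
        rw [Nat.choose_succ_right_eq, show a + b + 1 - b = a + 1 by omega]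
      have ih₂ := ihb (a + 1)
      rw [show a + (b + 1) = a + b + 1 by omega] at iha
      rw [show a + 1 + b = a + b + 1 by omega] at ih₂
      rw [pathCountBelow_succ_succ hle, hpascal]
      refine Nat.eq_of_mul_eq_mul_left (Nat.succ_pos a) ?_
      have hsb : s * b ≤ s * (b + 1) := Nat.mul_le_mul_left s b.le_succ
      zify [hle, (by omega : s * (b + 1) ≤ a + 1 + 1), (by omega : s * b ≤ a + 1 + 1)]
        at iha ih₂ ⊢
      zify at habsorb
      linear_combination ((a : ℤ) + 2) * iha + ((a : ℤ) + 1) * ih₂ - (s : ℤ) * habsorb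

theorem add_add_one_mul_pathCountBelow {s : ℕ} (hs : 0 < s) (a b : ℕ) :
    (a + b + 1) * pathCountBelow a b s = (a + 1 - s * b) * (a + b + 1).choose b := by
  refine Nat.eq_of_mul_eq_mul_left (Nat.succ_pos a) ?_
  calc (a + 1) * ((a + b + 1) * pathCountBelow a b s)
      = (a + b + 1) * ((a + 1) * pathCountBelow a b s) := by ring
    _ = (a + 1 - s * b) * ((a + b).choose b * (a + b + 1)) := by
      rw [add_one_mul_pathCountBelow hs]; ring
    _ = (a + 1 - s * b) * ((a + b + 1).choose b * (a + 1)) := by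
      rw [Nat.choose_mul_succ_eq, show a + b + 1 - b = a + 1 by omega]
    _ = (a + 1) * ((a + 1 - s * b) * (a + b + 1).choose b) := by ring

/-- The number of NE lattice paths from `(0,0)` to `((m-1)k + r - 1, k)` staying weakly
below `y = x/(m-1)` equals the Raney number `R_{m,r}(k) = (r/(mk+r)) C(mk+r, k)`,
stated multiplicatively. -/
theorem raney_lattice_path_count (m r k : ℕ) (hm : 2 ≤ m) (hr : 1 ≤ r) :
    (m * k + r) * pathCountBelow ((m - 1) * k + r - 1) k (m - 1) =
      r * Nat.choose (m * k + r) k := by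
  obtain ⟨s, rfl⟩ : ∃ s, m = s + 1 := ⟨m - 1, by omega⟩
  obtain ⟨r, rfl⟩ : ∃ r', r = r' + 1 := ⟨r - 1, by omega⟩
  have h := add_add_one_mul_pathCountBelow (s := s) (by omega) (s * k + r) k
  rw [show s * k + r + 1 - s * k = r + 1 by omega,
    show s * k + r + k + 1 = (s + 1) * k + (r + 1) by ring] at h
  simpa using h
end

section
/- For all integers m ≥ 2, r ≥ 1 and k ≥ 0, the rational number (r/(mk+r))·C(mk+r, k) is a positive integer; that is, (mk + r) divides r · C(mk + r, k), and the quotient is positive. -/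
-- `k * C(n, k) = n * C(n - 1, k - 1)`
theorem Nat.dvd_mul_choose (n k : ℕ) : n ∣ k * n.choose k := by
  rcases n with _ | n
  · exact zero_dvd_iff.mpr (by cases k <;> simp)
  rcases k with _ | k
  · simp
  exact ⟨n.choose k, by rw [Nat.add_one_mul_choose_eq, mul_comm]⟩

-- With `n = m * k + r`: `r * C(n, k) = n * C(n, k) - m * (k * C(n, k))`.
theorem Nat.add_dvd_mul_choose (m k r : ℕ) : m * k + r ∣ r * (m * k + r).choose k := by
  have h : m * k + r ∣ m * (k * (m * k + r).choose k) + r * (m * k + r).choose k := by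
    rw [← mul_assoc, ← add_mul]
    exact dvd_mul_right _ _
  exact (Nat.dvd_add_right (dvd_mul_of_dvd_right (Nat.dvd_mul_choose _ _) m)).mp h

/-- The Raney number `R_{m,r}(k) = (r/(mk+r)) C(mk+r, k)` is a positive integer:
`mk + r` divides `r * C(mk+r, k)` and the quotient is positive. -/
theorem raney_number_is_positive_integer (m r k : ℕ) (hm : 2 ≤ m) (hr : 1 ≤ r) :
    (m * k + r) ∣ r * Nat.choose (m * k + r) k ∧
      0 < r * Nat.choose (m * k + r) k / (m * k + r) := by
  have hdvd := Nat.add_dvd_mul_choose m k r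
  have hk : k ≤ m * k + r := le_add_right (Nat.le_mul_of_pos_left k (by omega))
  have hpos : 0 < r * Nat.choose (m * k + r) k := Nat.mul_pos hr (Nat.choose_pos hk)
  exact ⟨hdvd, Nat.div_pos (Nat.le_of_dvd hpos hdvd) (by omega)⟩
end

section
/- For every integer k ≥ 0, the number of NE lattice paths from (0,0) to (2k, k) that stay weakly below the line y = x/2 equals the Fuss–Catalan number (1/(2k+1))·C(3k, k); equivalently, (2k+1) times this number of paths equals C(3k, k). -/
-- Paths of any length `m` to any endpoint `q`, so that removing a step changes only `m` and `q`.
def IsBelowPath (s m : ℕ) (q : ℤ × ℤ) (p : Fin (m + 1) → ℤ × ℤ) : Prop :=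
  p 0 = (0, 0) ∧ p (Fin.last m) = q ∧
    (∀ i : Fin m, p i.succ - p i.castSucc = (1, 0) ∨ p i.succ - p i.castSucc = (0, 1)) ∧
    ∀ i, (s : ℤ) * (p i).2 ≤ (p i).1

noncomputable def belowPathCount (s m : ℕ) (q : ℤ × ℤ) : ℕ :=
  Nat.card {p // IsBelowPath s m q p}

section
variable {s m : ℕ} {q : ℤ × ℤ}

theorem isBelowPath_succ_iff {p : Fin (m + 2) → ℤ × ℤ} :
    IsBelowPath s (m + 1) q p ↔ p (Fin.last (m + 1)) = q ∧ (s : ℤ) * q.2 ≤ q.1 ∧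
      (IsBelowPath s m (q - (1, 0)) (Fin.init p) ∨ IsBelowPath s m (q - (0, 1)) (Fin.init p)) := by
  simp only [IsBelowPath, Fin.forall_fin_succ' (n := m), Fin.forall_fin_succ' (n := m + 1),
    Fin.init, Fin.castSucc_zero, Fin.succ_last, Fin.succ_castSucc, eq_sub_iff_add_eq]
  constructor
  · rintro ⟨h0, hq, ⟨hs, hlast⟩, hb, hbq⟩
    subst hq
    refine ⟨rfl, hbq, ?_⟩
    rcases hlast with h | h <;> [left; right] <;> exact ⟨h0, by rw [← h]; abel, hs, hb⟩
  · rintro ⟨rfl, hbq, ⟨h0, hlast, hs, hb⟩ | ⟨h0, hlast, hs, hb⟩⟩ <;>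
      refine ⟨h0, rfl, ⟨hs, ?_⟩, hb, hbq⟩
    · left; rw [← hlast]; abel
    · right; rw [← hlast]; abel

def belowPathInitEquiv (h : (s : ℤ) * q.2 ≤ q.1) :
    {p // IsBelowPath s (m + 1) q p} ≃
      {p // IsBelowPath s m (q - (1, 0)) p ∨ IsBelowPath s m (q - (0, 1)) p} where
  toFun p := ⟨Fin.init p.1, (isBelowPath_succ_iff.1 p.2).2.2⟩
  invFun p := ⟨Fin.snoc p.1 q, isBelowPath_succ_iff.2 ⟨Fin.snoc_last .., h, by simpa using p.2⟩⟩
  left_inv p := Subtype.ext <| (isBelowPath_succ_iff.1 p.2).1 ▸ Fin.snoc_init_self p.1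
  right_inv p := Subtype.ext <| Fin.init_snoc (α := fun _ => ℤ × ℤ) ..

theorem disjoint_isBelowPath {q q' : ℤ × ℤ} (h : q ≠ q') :
    Disjoint (IsBelowPath s m q) (IsBelowPath s m q') := by
  simp only [Pi.disjoint_iff, Prop.disjoint_iff]
  exact fun p ⟨hq, hq'⟩ => h (hq.2.1.symm.trans hq'.2.1)

open Classical in
noncomputable def belowPathSuccEquiv (h : (s : ℤ) * q.2 ≤ q.1) :
    {p // IsBelowPath s (m + 1) q p} ≃
      {p // IsBelowPath s m (q - (1, 0)) p} ⊕ {p // IsBelowPath s m (q - (0, 1)) p} :=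
  (belowPathInitEquiv h).trans (subtypeOrEquiv _ _ (disjoint_isBelowPath (by simp)))

theorem isEmpty_belowPath_of_lt (h : q.1 < s * q.2) : IsEmpty {p // IsBelowPath s m q p} :=
  ⟨fun p => (p.2.2.1 ▸ p.2.2.2.2 (Fin.last m)).not_gt h⟩

theorem isBelowPath_zero_iff {p : Fin 1 → ℤ × ℤ} :
    IsBelowPath s 0 q p ↔ q = (0, 0) ∧ p = fun _ => (0, 0) := by
  constructor
  · rintro ⟨h0, rfl, -, -⟩
    exact ⟨h0, funext (Fin.forall_fin_one.2 h0)⟩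
  · rintro ⟨rfl, rfl⟩
    exact ⟨rfl, rfl, Fin.elim0, fun _ => by simp⟩

instance finite_belowPath : Finite {p // IsBelowPath s m q p} := by
  induction m generalizing q with
  | zero =>
    have : Subsingleton {p // IsBelowPath s 0 q p} := ⟨fun p p' => Subtype.ext <|
      (isBelowPath_zero_iff.1 p.2).2.trans (isBelowPath_zero_iff.1 p'.2).2.symm⟩
    infer_instance
  | succ m ih =>
    rcases le_or_gt ((s : ℤ) * q.2) q.1 with h | h
    · exact .of_equiv _ (belowPathSuccEquiv h).symm
    · have := isEmpty_belowPath_of_lt (m := m + 1) h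
      infer_instance

theorem belowPathCount_zero : belowPathCount s 0 q = if q = (0, 0) then 1 else 0 := by
  rw [belowPathCount, Nat.card_congr (Equiv.subtypeEquivRight fun _ => isBelowPath_zero_iff)]
  split_ifs with hq <;> simp [hq]

theorem belowPathCount_succ_of_le (h : (s : ℤ) * q.2 ≤ q.1) :
    belowPathCount s (m + 1) q = belowPathCount s m (q - (1, 0)) + belowPathCount s m (q - (0, 1)) :=
  (Nat.card_congr (belowPathSuccEquiv h)).trans (Nat.card_sum ..)

theorem belowPathCount_succ_of_lt (h : q.1 < s * q.2) : belowPathCount s (m + 1) q = 0 :=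
  have := isEmpty_belowPath_of_lt (m := m + 1) h
  Nat.card_of_isEmpty

theorem belowPathCount_eq_zero_of_neg (hq : q.1 < 0 ∨ q.2 < 0) : belowPathCount s m q = 0 := by
  induction m generalizing q with
  | zero =>
    rw [belowPathCount_zero, if_neg]
    rintro rfl
    simp at hq
  | succ m ih =>
    rcases le_or_gt ((s : ℤ) * q.2) q.1 with h | h
    · rw [belowPathCount_succ_of_le h, ih, ih] <;> simp <;> omega
    · exact belowPathCount_succ_of_lt h

end

theorem Nat.mul_choose_succ_eq_choose {s a b : ℕ} (h : s * b = a + 1) :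
    s * (a + b).choose (a + 1) = (a + b).choose a := by
  have hchoose := Nat.choose_succ_right_eq (a + b) a
  rw [Nat.add_sub_cancel_left] at hchoose
  apply Nat.eq_of_mul_eq_mul_right a.succ_pos
  rw [mul_assoc, hchoose, mul_left_comm, h, mul_comm]

theorem belowPathCount_add_mul_choose {s a b : ℕ} (h : s * b ≤ a + 1) :
    belowPathCount s (a + b) (a, b) + s * (a + b).choose (a + 1) = (a + b).choose a := by
  generalize hm : a + b = m at h ⊢
  induction m generalizing a b with
  | zero =>
    obtain ⟨rfl, rfl⟩ : a = 0 ∧ b = 0 := by omega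
    simp [belowPathCount_zero]
  | succ m ih =>
    rcases le_or_gt (s * b) a with hle | hlt
    · rw [belowPathCount_succ_of_le (by simp only; exact_mod_cast hle)]
      rcases a with _ | a <;> rcases b with _ | b <;>
        simp only [Prod.mk_sub_mk, Nat.cast_add, Nat.cast_one, Nat.cast_zero, sub_zero,
          add_sub_cancel_right, zero_sub] at hle ⊢
      · omega
      · obtain rfl : s = 0 := by simpa using hle
        rw [belowPathCount_eq_zero_of_neg (by simp)]
        simpa using ih (a := 0) (b := b) (by simp) (by omega)
      · obtain rfl : m = a := by omega
        rw [belowPathCount_eq_zero_of_neg (q := (_, -1)) (by simp)]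
        simpa using ih (a := m) (b := 0) (by simp) (by omega)
      · have h1 := ih (a := a) (b := b + 1) hle (by omega)
        have h2 := ih (a := a + 1) (b := b) (by nlinarith) (by omega)
        push_cast at h1 h2
        rw [Nat.choose_succ_succ, Nat.choose_succ_succ]
        linarith
    · rw [belowPathCount_succ_of_lt (by simp only; exact_mod_cast hlt), zero_add, ← hm]
      exact Nat.mul_choose_succ_eq_choose (by omega)

theorem pathCountBelow_eq_belowPathCount (a b s : ℕ) :
    pathCountBelow a b s = belowPathCount s (a + b) (a, b) :=
  Nat.card_congr <| Equiv.subtypeEquivRight fun _ => by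
    simp only [IsNEPath, IsBelowPath]
    tauto

theorem succ_mul_pathCountBelow {a b s : ℕ} (h : s * b ≤ a + 1) :
    (a + 1) * pathCountBelow a b s = (a + 1 - s * b) * (a + b).choose b := by
  have hcount := belowPathCount_add_mul_choose h
  have hchoose := Nat.choose_succ_right_eq (a + b) a
  rw [Nat.add_sub_cancel_left] at hchoose
  rw [pathCountBelow_eq_belowPathCount, ← Nat.choose_symm_add, Nat.sub_mul]
  refine Nat.eq_sub_of_add_eq ?_
  calc (a + 1) * belowPathCount s (a + b) (a, b) + s * b * (a + b).choose a
      = (a + 1) * belowPathCount s (a + b) (a, b) + s * ((a + b).choose (a + 1) * (a + 1)) := by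
        rw [hchoose]; ring
    _ = (a + 1) * (a + b).choose a := by rw [← hcount]; ring

/-- The number of NE lattice paths from `(0,0)` to `(2k, k)` staying weakly below
`y = x/2` equals the Fuss–Catalan number `(1/(2k+1)) C(3k, k)`, stated
multiplicatively. -/
theorem fuss_catalan_lattice_path_count (k : ℕ) :
    (2 * k + 1) * pathCountBelow (2 * k) k 2 = Nat.choose (3 * k) k := by
  rw [succ_mul_pathCountBelow le_self_add, Nat.add_sub_cancel_left, one_mul]
  ring_nf
end

section
/- For all integers p ≥ 2 and k ≥ 0, the number of NE lattice paths from (0,0) to (2pk + 2p − 1, k) that stay weakly below the line y = x/(2p) equals the Raney number R_{2p+1, 2p}(k) = (2p/((2p+1)k + 2p))·C((2p+1)k + 2p, k); equivalently, ((2p+1)k + 2p) times this number of paths equals 2p · C((2p+1)k + 2p, k). (In the paper this is the lattice-path count N_k^{(p,f=1)}(a=0,q=1) for the positive twist knot K_{p>1} ≡ L(2p−1,1,1) at framing f = 1.) -/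
open Finset
open scoped Classical
open Fin.NatCast

def StaysAbove (S : ℕ → ℤ) (i : ℕ) : Prop := ∀ t, i < t → S i < S t

section CycleLemma

variable {S : ℕ → ℤ} {n : ℕ}

theorem le_of_forall_le_window (hn : 0 < n) {d : ℤ} (hd : 0 ≤ d)
    (hper : ∀ t, S (t + n) = S t + d) {a : ℕ} {c : ℤ}
    (h : ∀ t, a ≤ t → t < a + n → c ≤ S t) (t : ℕ) (ht : a ≤ t) : c ≤ S t := by
  induction t using Nat.strong_induction_on with
  | _ t ih =>
    by_cases htn : t < a + n
    · exact h t ht htn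
    · obtain ⟨u, rfl⟩ : ∃ u, t = u + n := ⟨t - n, by omega⟩
      have := ih u (by omega) (by omega)
      rw [hper]
      omega

theorem add_mul_le_of_mul_le {s : ℕ} (hper : ∀ t, S (t + n) = S t + s) {m : ℤ}
    (hm : ∀ t, m ≤ S t) (q : ℕ) {t : ℕ} (ht : q * n ≤ t) : m + q * s ≤ S t := by
  induction q generalizing t with
  | zero => simpa using hm t
  | succ q ih =>
    obtain ⟨u, rfl⟩ : ∃ u, t = u + n := ⟨t - n, by rw [Nat.succ_mul] at ht; omega⟩
    have := ih (t := u) (by rw [Nat.succ_mul] at ht; omega)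
    rw [hper]
    push_cast
    linarith

theorem StaysAbove.add_period {d : ℤ} (hper : ∀ t, S (t + n) = S t + d) {i : ℕ}
    (h : StaysAbove S i) : StaysAbove S (i + n) := by
  intro t ht
  obtain ⟨u, rfl⟩ : ∃ u, t = u + n := ⟨t - n, by omega⟩
  have := h u (by omega)
  rw [hper, hper]
  omega

theorem StaysAbove.eq_of_apply_eq {i j : ℕ} (hi : StaysAbove S i) (hj : StaysAbove S j)
    (h : S i = S j) : i = j := by
  by_contra hne
  rcases Nat.lt_or_gt_of_ne hne with hij | hji
  · exact (hi j hij).ne h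
  · exact (hj i hji).ne h.symm

/-- The last visit of `S` to level `c`: since `S` climbs by at most one per step, the last time
`S` is at most `c` it equals `c`. -/
theorem exists_staysAbove_eq (hstep : ∀ t, S (t + 1) ≤ S t + 1) {c : ℤ}
    (hc : ∃ t, S t ≤ c) (hev : ∃ N, ∀ t, N ≤ t → c < S t) :
    ∃ i, StaysAbove S i ∧ S i = c := by
  set N := Nat.find hev
  have hN : ∀ t, N ≤ t → c < S t := Nat.find_spec hev
  obtain ⟨t₀, ht₀⟩ := hc
  have hN0 : N ≠ 0 := fun h0 => (hN t₀ (by omega)).not_ge ht₀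
  obtain ⟨t, ht, hSt⟩ : ∃ t, N - 1 ≤ t ∧ S t ≤ c := by
    simpa using Nat.find_min hev (show N - 1 < N by omega)
  obtain rfl : t = N - 1 := by
    by_contra hne
    exact (hN t (by omega)).not_ge hSt
  have hup := hstep (N - 1)
  rw [Nat.sub_add_cancel (Nat.one_le_iff_ne_zero.2 hN0)] at hup
  have := hN N le_rfl
  refine ⟨N - 1, fun t ht => ?_, by omega⟩
  have := hN t (by omega)
  omega

/-- The cycle lemma: the values of `S` at the times in `[0, n)` after which it stays strictly
above are exactly the levels `[min S, min S + s)`. -/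
theorem card_filter_staysAbove_range {s : ℕ} (hs : 0 < s) (hstep : ∀ t, S (t + 1) ≤ S t + 1)
    (hper : ∀ t, S (t + n) = S t + s) : #{i ∈ range n | StaysAbove S i} = s := by
  have hn : 0 < n := by
    refine Nat.pos_of_ne_zero fun h => ?_
    have := hper 0
    simp only [h, add_zero, left_eq_add, Nat.cast_eq_zero] at this
    omega
  obtain ⟨r, -, hr⟩ := exists_min_image (range n) S (nonempty_range_iff.2 hn.ne')
  have hmin : ∀ t, S r ≤ S t := fun t =>
    le_of_forall_le_window hn (Nat.cast_nonneg s) hper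
      (fun t _ ht => hr t (mem_range.2 (by omega))) (a := 0) t (Nat.zero_le t)
  have hvisit : ∀ c, S r ≤ c → ∃ i, StaysAbove S i ∧ S i = c := fun c hc =>
    exists_staysAbove_eq hstep ⟨r, hc⟩ ⟨(c - S r + 1).toNat * n, fun t ht => by
      have h1 := add_mul_le_of_mul_le hper hmin _ ht
      have h2 : ((c - S r + 1).toNat : ℤ) * 1 ≤ (c - S r + 1).toNat * s :=
        mul_le_mul_of_nonneg_left (by exact_mod_cast hs) (by positivity)
      have h3 := Int.self_le_toNat (c - S r + 1)
      linarith⟩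
  have himage : image S {i ∈ range n | StaysAbove S i} = Ico (S r) (S r + s) := by
    ext c
    simp only [mem_image, mem_filter, mem_range, mem_Ico]
    constructor
    · rintro ⟨i, ⟨hin, hi⟩, rfl⟩
      refine ⟨hmin i, not_le.1 fun hge => ?_⟩
      obtain ⟨j, hj, hSj⟩ := hvisit (S i - s) (by omega)
      have := (hj.add_period hper).eq_of_apply_eq hi (by rw [hper, hSj]; ring)
      omega
    · rintro ⟨hlo, hhi⟩
      obtain ⟨i, hi, rfl⟩ := hvisit c hlo
      refine ⟨i, ⟨not_le.1 fun hge => ?_, hi⟩, rfl⟩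
      have := hper (i - n)
      rw [Nat.sub_add_cancel hge] at this
      have := hmin (i - n)
      omega
  have hinj : Set.InjOn S ↑{i ∈ range n | StaysAbove S i} := by
    intro i hi j hj h
    rw [coe_filter] at hi hj
    exact hi.2.eq_of_apply_eq hj.2 h
  rw [← card_image_of_injOn hinj, himage, Int.card_Ico]
  omega

end CycleLemma

theorem Fin.partialSum_last {G : Type*} [AddCommMonoid G] {n : ℕ} (f : Fin n → G) :
    Fin.partialSum f (Fin.last n) = ∑ j, f j := by
  rw [Fin.partialSum, Fin.val_last, List.take_of_length_le (List.length_ofFn).le, List.sum_ofFn]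

section CyclicPartialSum

/-- `(j : Fin n)` is `j % n`, so these are the partial sums of the periodic extension of `f`. -/
def cyclicPartialSum {G : Type*} [AddCommMonoid G] {n : ℕ} [NeZero n] (f : Fin n → G)
    (t : ℕ) : G :=
  ∑ j ∈ range t, f (j : Fin n)

variable {G : Type*} [AddCommMonoid G] {n : ℕ} [NeZero n] (f : Fin n → G)

theorem cyclicPartialSum_succ (t : ℕ) :
    cyclicPartialSum f (t + 1) = cyclicPartialSum f t + f (t : Fin n) :=
  sum_range_succ _ _

theorem cyclicPartialSum_add (i t : ℕ) :
    cyclicPartialSum f (i + t) =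
      cyclicPartialSum f i + cyclicPartialSum (fun j => f ((i : Fin n) + j)) t := by
  simp only [cyclicPartialSum, sum_range_add, Nat.cast_add]

theorem cyclicPartialSum_add_period (t : ℕ) :
    cyclicPartialSum f (t + n) = cyclicPartialSum f t + cyclicPartialSum f n := by
  rw [add_comm t, cyclicPartialSum_add, add_comm (cyclicPartialSum f t)]
  simp only [Fin.natCast_self, zero_add]

theorem cyclicPartialSum_rotate (i : Fin n) (t : ℕ) :
    cyclicPartialSum (fun j => f (i + j)) t + cyclicPartialSum f i =
      cyclicPartialSum f (i + t) := by
  rw [cyclicPartialSum_add, Fin.cast_val_eq_self, add_comm]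

theorem cyclicPartialSum_eq_partialSum (i : Fin (n + 1)) :
    cyclicPartialSum f i = Fin.partialSum f i := by
  induction i using Fin.induction with
  | zero => simp [cyclicPartialSum]
  | succ i ih =>
    rw [Fin.val_succ, cyclicPartialSum_succ, ← Fin.val_castSucc, ih, Fin.partialSum_succ,
      Fin.val_castSucc, Fin.cast_val_eq_self]

theorem cyclicPartialSum_self : cyclicPartialSum f n = ∑ j, f j := by
  rw [← Fin.partialSum_last, ← cyclicPartialSum_eq_partialSum, Fin.val_last]

end CyclicPartialSum

section Words

variable {n : ℕ}

/-- The increment of `x - s * y` along a lattice step; `true` encodes a north step. -/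
def weight (s : ℕ) (b : Bool) : ℤ := if b then -s else 1

def countTrue (w : Fin n → Bool) : ℕ := #{j | w j}

def IsPositiveWord (s : ℕ) (w : Fin n → Bool) : Prop :=
  ∀ i : Fin n, 0 < Fin.partialSum (weight s ∘ w) i.succ

theorem weight_le_one (s : ℕ) (b : Bool) : weight s b ≤ 1 := by
  cases b <;> simp [weight]

theorem countTrue_eq_sum (w : Fin n → Bool) :
    (countTrue w : ℤ) = ∑ j, if w j then 1 else 0 := by
  simp only [countTrue, card_filter, Nat.cast_sum, Nat.cast_ite, Nat.cast_one, Nat.cast_zero]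

theorem sum_weight (s : ℕ) (w : Fin n → Bool) :
    ∑ j, weight s (w j) = n - (s + 1) * countTrue w := by
  calc ∑ j, weight s (w j) = ∑ j, (1 - (s + 1) * if w j then 1 else 0 : ℤ) :=
        sum_congr rfl fun j _ => by cases w j <;> simp [weight]
    _ = n - (s + 1) * countTrue w := by rw [sum_sub_distrib, ← mul_sum, countTrue_eq_sum]; simp

theorem countTrue_comp_equiv (w : Fin n → Bool) (e : Fin n ≃ Fin n) :
    countTrue (w ∘ e) = countTrue w := by
  rw [← Nat.cast_inj (R := ℤ), countTrue_eq_sum, countTrue_eq_sum]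
  exact e.sum_comp fun j => if w j then 1 else 0

theorem card_countTrue_eq (k : ℕ) : #{w : Fin n → Bool | countTrue w = k} = n.choose k := by
  calc #{w : Fin n → Bool | countTrue w = k} = #(powersetCard k (univ : Finset (Fin n))) := by
        refine card_nbij' (fun w => ({j | w j} : Finset (Fin n))) (fun A j => decide (j ∈ A))
          ?_ ?_ ?_ ?_
        · intro w hw
          rw [mem_coe, mem_filter] at hw
          rw [mem_coe, mem_powersetCard]
          exact ⟨subset_univ _, hw.2⟩
        · intro A hA
          rw [mem_coe, mem_powersetCard] at hA
          rw [mem_coe, mem_filter, countTrue]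
          simpa using hA.2
        · intro w _
          ext j
          simp
        · intro A _
          ext j
          simp
    _ = n.choose k := by simp [card_powersetCard]

end Words

section Rotation

variable {n : ℕ} [NeZero n] {s : ℕ}

theorem cyclicPartialSum_weight_succ_le (w : Fin n → Bool) (t : ℕ) :
    cyclicPartialSum (weight s ∘ w) (t + 1) ≤ cyclicPartialSum (weight s ∘ w) t + 1 := by
  rw [cyclicPartialSum_succ]
  exact add_le_add_right (weight_le_one s _) _

theorem isPositiveWord_iff_cyclicPartialSum (w : Fin n → Bool) :
    IsPositiveWord s w ↔ ∀ t, 0 < t → t ≤ n → 0 < cyclicPartialSum (weight s ∘ w) t := by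
  simp only [IsPositiveWord, ← cyclicPartialSum_eq_partialSum, Fin.val_succ]
  constructor
  · intro h t ht₀ htn
    obtain ⟨i, rfl⟩ : ∃ i, t = i + 1 := ⟨t - 1, by omega⟩
    exact h ⟨i, by omega⟩
  · intro h i
    exact h _ (Nat.succ_pos _) i.isLt

theorem isPositiveWord_rotate_iff (w : Fin n → Bool)
    (hsum : 0 ≤ cyclicPartialSum (weight s ∘ w) n) (i : Fin n) :
    IsPositiveWord s (w ∘ Equiv.addLeft i) ↔ StaysAbove (cyclicPartialSum (weight s ∘ w)) i := by
  have hrot (t : ℕ) : cyclicPartialSum (weight s ∘ w ∘ Equiv.addLeft i) t +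
      cyclicPartialSum (weight s ∘ w) i = cyclicPartialSum (weight s ∘ w) (i + t) :=
    cyclicPartialSum_rotate (weight s ∘ w) i t
  rw [isPositiveWord_iff_cyclicPartialSum]
  constructor
  · intro h
    refine le_of_forall_le_window (NeZero.pos n) hsum (cyclicPartialSum_add_period _)
      (a := i + 1) (fun t ht htn => ?_)
    obtain ⟨u, rfl⟩ : ∃ u, t = i + u := ⟨t - i, by omega⟩
    have := h u (by omega) (by omega)
    have := hrot u
    omega
  · intro h t ht₀ htn
    have := h (i + t) (by omega)
    have := hrot t
    omega

theorem card_isPositiveWord_rotate (hs : 0 < s) (w : Fin n → Bool)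
    (hsum : cyclicPartialSum (weight s ∘ w) n = s) :
    #{i : Fin n | IsPositiveWord s (w ∘ Equiv.addLeft i)} = s := by
  have hrot := isPositiveWord_rotate_iff w (hsum ▸ Nat.cast_nonneg s)
  refine Eq.trans ?_ (card_filter_staysAbove_range hs (cyclicPartialSum_weight_succ_le w)
    (fun t => hsum ▸ cyclicPartialSum_add_period _ t))
  refine card_nbij (·.val) (fun i hi => ?_) Fin.val_injective.injOn (fun t ht => ?_)
  · rw [mem_coe, mem_filter] at hi ⊢
    exact ⟨mem_range.2 i.isLt, (hrot i).1 hi.2⟩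
  · rw [mem_coe, mem_filter, mem_range] at ht
    refine ⟨⟨t, ht.1⟩, ?_, rfl⟩
    rw [mem_coe, mem_filter]
    exact ⟨mem_univ _, (hrot _).2 ht.2⟩

theorem card_filter_comp_addLeft {α : Type*} [Fintype α] (P : (Fin n → α) → Prop)
    [DecidablePred P] :
    #{x : Fin n × (Fin n → α) | P (x.2 ∘ Equiv.addLeft x.1)} = n * #{w | P w} := by
  refine Eq.trans ?_ ((card_product (univ : Finset (Fin n)) {w | P w}).trans (by rw [card_fin]))
  refine card_nbij' (fun x => (x.1, x.2 ∘ Equiv.addLeft x.1))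
    (fun x => (x.1, x.2 ∘ (Equiv.addLeft x.1).symm)) ?_ ?_ ?_ ?_
  · intro x hx
    simp only [mem_coe, mem_filter, mem_product, mem_univ, true_and] at hx ⊢
    exact hx
  · intro x hx
    simp only [mem_coe, mem_filter, mem_product, mem_univ, true_and] at hx ⊢
    rwa [Function.comp_assoc, Equiv.symm_comp_self, Function.comp_id]
  · intro x _
    simp only [Function.comp_assoc, Equiv.self_comp_symm, Function.comp_id]
  · intro x _
    simp only [Function.comp_assoc, Equiv.symm_comp_self, Function.comp_id]

theorem mul_card_isPositiveWord (hs : 0 < s) {k : ℕ} (hn : n = (s + 1) * k + s) :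
    n * #{w : Fin n → Bool | countTrue w = k ∧ IsPositiveWord s w} = s * n.choose k := by
  have hfibre (w : Fin n → Bool) :
      #{i : Fin n | countTrue w = k ∧ IsPositiveWord s (w ∘ Equiv.addLeft i)} =
        if countTrue w = k then s else 0 := by
    split_ifs with hw
    · simp only [hw, true_and]
      refine card_isPositiveWord_rotate hs w ?_
      rw [cyclicPartialSum_self]
      exact (sum_weight s w).trans (by rw [hw, hn]; push_cast; ring)
    · simp [hw]
  rw [← card_filter_comp_addLeft fun w => countTrue w = k ∧ IsPositiveWord s w]
  calc _ = ∑ w, #{i : Fin n | countTrue w = k ∧ IsPositiveWord s (w ∘ Equiv.addLeft i)} := by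
        simp only [countTrue_comp_equiv, card_filter, Fintype.sum_prod_type_right]
    _ = ∑ w : Fin n → Bool, if countTrue w = k then s else 0 := sum_congr rfl fun w _ => hfibre w
    _ = s * n.choose k := by rw [← sum_filter, sum_const, card_countTrue_eq, smul_eq_mul, mul_comm]

end Rotation

section Paths

def stepVec (b : Bool) : ℤ × ℤ := if b then (0, 1) else (1, 0)

def stepsOf {m : ℕ} (p : Fin (m + 1) → ℤ × ℤ) : Fin m → Bool :=
  fun j => decide (p j.succ - p j.castSucc = (0, 1))

variable {m : ℕ}

theorem partialSum_stepVec_sub_mul (s : ℕ) (w : Fin m → Bool) (i : Fin (m + 1)) :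
    (Fin.partialSum (stepVec ∘ w) i).1 - s * (Fin.partialSum (stepVec ∘ w) i).2 =
      Fin.partialSum (weight s ∘ w) i := by
  induction i using Fin.induction with
  | zero => simp
  | succ i ih =>
    rw [Fin.partialSum_succ, Fin.partialSum_succ, ← ih]
    cases hw : w i <;> simp [stepVec, weight, hw] <;> ring

theorem partialSum_stepVec_last (w : Fin m → Bool) :
    Fin.partialSum (stepVec ∘ w) (Fin.last m) = ((m : ℤ) - countTrue w, (countTrue w : ℤ)) := by
  have h (b : Bool) : stepVec b = (1 - if b then 1 else 0, if b then 1 else 0) := by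
    cases b <;> rfl
  simp only [Fin.partialSum_last, Function.comp_apply, h, countTrue_eq_sum]
  ext <;> simp [Prod.fst_sum, Prod.snd_sum, sum_sub_distrib]

theorem isNEPath_partialSum_iff {a b : ℕ} (w : Fin (a + b) → Bool) :
    IsNEPath a b (Fin.partialSum (stepVec ∘ w)) ↔ countTrue w = b := by
  have hsteps (j : Fin (a + b)) :
      Fin.partialSum (stepVec ∘ w) j.succ - Fin.partialSum (stepVec ∘ w) j.castSucc =
        stepVec (w j) := by
    rw [Fin.partialSum_succ, add_sub_cancel_left, Function.comp_apply]
  have heast_or_north (b : Bool) : stepVec b = (1, 0) ∨ stepVec b = (0, 1) := by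
    cases b <;> simp [stepVec]
  simp only [IsNEPath, Fin.partialSum_zero, partialSum_stepVec_last, hsteps, heast_or_north,
    Prod.mk.injEq, Prod.zero_eq_mk, implies_true, and_true, true_and]
  push_cast
  omega

theorem stepsOf_partialSum (w : Fin m → Bool) : stepsOf (Fin.partialSum (stepVec ∘ w)) = w := by
  funext j
  rw [stepsOf, Fin.partialSum_succ, add_sub_cancel_left, Function.comp_apply]
  cases w j <;> simp [stepVec]

theorem partialSum_stepsOf {p : Fin (m + 1) → ℤ × ℤ} (hp₀ : p 0 = 0)
    (hp : ∀ j : Fin m, p j.succ - p j.castSucc = (1, 0) ∨ p j.succ - p j.castSucc = (0, 1)) :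
    Fin.partialSum (stepVec ∘ stepsOf p) = p := by
  conv_rhs => rw [← Fin.partialSum_left_neg p, hp₀, zero_vadd]
  congr 1
  funext j
  rw [Function.comp_apply, neg_add_eq_sub]
  rcases hp j with h | h <;> simp [stepsOf, stepVec, h]

theorem pathCountBelow_eq_card (a b s : ℕ) :
    pathCountBelow a b s = Nat.card {w : Fin (a + b) → Bool //
      countTrue w = b ∧ ∀ i, 0 ≤ Fin.partialSum (weight s ∘ w) i} := by
  have hbelow (w : Fin (a + b) → Bool) (i : Fin (a + b + 1)) :
      (s : ℤ) * (Fin.partialSum (stepVec ∘ w) i).2 ≤ (Fin.partialSum (stepVec ∘ w) i).1 ↔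
        0 ≤ Fin.partialSum (weight s ∘ w) i := by
    rw [← partialSum_stepVec_sub_mul, sub_nonneg]
  refine Nat.card_congr
    { toFun := fun p => ⟨stepsOf p.1, ?_, fun i => ?_⟩
      invFun := fun w => ⟨Fin.partialSum (stepVec ∘ w.1),
        (isNEPath_partialSum_iff w.1).2 w.2.1, fun i => (hbelow w.1 i).2 (w.2.2 i)⟩
      left_inv := fun p => Subtype.ext (partialSum_stepsOf p.2.1.1 p.2.1.2.2)
      right_inv := fun w => Subtype.ext (stepsOf_partialSum w.1) }
  all_goals
    obtain ⟨p, hp, hp_below⟩ := p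
    have hp_eq := partialSum_stepsOf hp.1 hp.2.2
  · rw [← isNEPath_partialSum_iff, hp_eq]
    exact hp
  · rw [← hbelow, hp_eq]
    exact hp_below i

end Paths

section Prepend

variable {m : ℕ} {s : ℕ}

theorem IsPositiveWord.head_eq_false {w : Fin (m + 1) → Bool} (h : IsPositiveWord s w) :
    w 0 = false := by
  have h₀ := h 0
  rw [Fin.partialSum_succ, Fin.castSucc_zero, Fin.partialSum_zero, zero_add,
    Function.comp_apply] at h₀
  cases hw : w 0
  · rfl
  · simp [hw, weight] at h₀
    omega

theorem isPositiveWord_cons_false_iff (w : Fin m → Bool) :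
    IsPositiveWord s (Fin.cons false w : Fin (m + 1) → Bool) ↔
      ∀ i, 0 ≤ Fin.partialSum (weight s ∘ w) i := by
  have htail : Fin.tail (weight s ∘ Fin.cons false w : Fin (m + 1) → ℤ) = weight s ∘ w := rfl
  have hhead : (weight s ∘ Fin.cons false w : Fin (m + 1) → ℤ) 0 = 1 := rfl
  simp only [IsPositiveWord, Fin.partialSum_succ', htail, hhead]
  exact forall_congr' fun i => by omega

theorem countTrue_cons_false (w : Fin m → Bool) :
    countTrue (Fin.cons false w : Fin (m + 1) → Bool) = countTrue w := by
  rw [← Nat.cast_inj (R := ℤ), countTrue_eq_sum, countTrue_eq_sum, Fin.sum_univ_succ]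
  simp

theorem card_prefix_nonneg_eq_card_isPositiveWord (b : ℕ) :
    Nat.card {w : Fin m → Bool // countTrue w = b ∧ ∀ i, 0 ≤ Fin.partialSum (weight s ∘ w) i} =
      Nat.card {w : Fin (m + 1) → Bool // countTrue w = b ∧ IsPositiveWord s w} := by
  have hcons (w : Fin (m + 1) → Bool) (hw : IsPositiveWord s w) :
      Fin.cons false (Fin.tail w) = w := by
    rw [← hw.head_eq_false]
    exact Fin.cons_self_tail w
  refine Nat.card_congr
    { toFun := fun w => ⟨Fin.cons false w.1, (countTrue_cons_false w.1).trans w.2.1,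
        (isPositiveWord_cons_false_iff w.1).2 w.2.2⟩
      invFun := fun w => ⟨Fin.tail w.1, ?_, ?_⟩
      left_inv := fun w => Subtype.ext (Fin.tail_cons (α := fun _ => Bool) false w.1)
      right_inv := fun w => Subtype.ext (hcons w.1 w.2.2) }
  · rw [← countTrue_cons_false, hcons w.1 w.2.2]
    exact w.2.1
  · rw [← isPositiveWord_cons_false_iff, hcons w.1 w.2.2]
    exact w.2.2

end Prepend

theorem mul_pathCountBelow_eq_mul_choose (s k : ℕ) (hs : 0 < s) :
    ((s + 1) * k + s) * pathCountBelow (s * k + s - 1) k s = s * ((s + 1) * k + s).choose k := by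
  have hn : s * k + s - 1 + k + 1 = (s + 1) * k + s := by
    rw [add_mul, one_mul]
    omega
  rw [← hn, pathCountBelow_eq_card, card_prefix_nonneg_eq_card_isPositiveWord,
    Nat.card_eq_fintype_card, Fintype.card_subtype]
  exact mul_card_isPositiveWord hs hn

/-- Positive twist knots `K_{p>1}` at framing `f = 1`: the number of NE lattice paths
from `(0,0)` to `(2pk + 2p - 1, k)` staying weakly below `y = x/(2p)` equals the
Raney number `R_{2p+1, 2p}(k) = (2p/((2p+1)k + 2p)) C((2p+1)k + 2p, k)`, stated
multiplicatively. -/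
theorem positive_twist_knot_framing_one_path_count (p k : ℕ) (hp : 2 ≤ p) :
    ((2 * p + 1) * k + 2 * p) * pathCountBelow (2 * p * k + 2 * p - 1) k (2 * p) =
      2 * p * Nat.choose ((2 * p + 1) * k + 2 * p) k :=
  mul_pathCountBelow_eq_mul_choose (2 * p) k (by omega)
end

section
/- For all integers p ≥ 1 and k ≥ 0, the number of NE lattice paths from (0,0) to ((2p+5)k + 2p + 1, k) that stay weakly below the line y = x/(2p+5) equals the Raney number R_{2p+6, 2p+2}(k) = ((2p+2)/((2p+6)k + 2p + 2))·C((2p+6)k + 2p + 2, k); equivalently, ((2p+6)k + 2p + 2) times this number of paths equals (2p+2) · C((2p+6)k + 2p + 2, k). (In the paper this is the lattice-path count N_k^{(p,0)}(a=0,q=1) for the double twist knot K(p+1,2) ≡ L(2p+1,3,1) at framing f = 0.) -/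
/-- Number of `true`s among the first `j` entries of `f`. -/
def cntT {n : ℕ} (f : Fin n → Bool) : ℕ → ℕ
  | 0 => 0
  | (j+1) => cntT f j + (if h : j < n then (if f ⟨j, h⟩ then 1 else 0) else 0)

lemma cntT_le {n : ℕ} (f : Fin n → Bool) (j : ℕ) : cntT f j ≤ j := by
  induction j with
  | zero => simp [cntT]
  | succ j ih =>
    simp only [cntT]
    split <;> [skip; omega] <;> split <;> omega

lemma cntT_snoc_of_le {n : ℕ} (f : Fin n → Bool) (x : Bool) {j : ℕ} (hj : j ≤ n) :
    cntT (Fin.snoc f x) j = cntT f j := by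
  induction j with
  | zero => rfl
  | succ j ih =>
    have hj' : j ≤ n := by omega
    have hjn : j < n := by omega
    simp only [cntT, ih hj']
    rw [dif_pos (by omega : j < n + 1), dif_pos hjn]
    have : (⟨j, by omega⟩ : Fin (n+1)) = Fin.castSucc ⟨j, hjn⟩ := rfl
    rw [this, Fin.snoc_castSucc]

lemma cntT_snoc_top {n : ℕ} (f : Fin n → Bool) (x : Bool) :
    cntT (Fin.snoc f x) (n+1) = cntT f n + (if x then 1 else 0) := by
  simp only [cntT, cntT_snoc_of_le f x le_rfl]
  rw [dif_pos (by omega : n < n + 1)]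
  have : (⟨n, by omega⟩ : Fin (n+1)) = Fin.last n := rfl
  rw [this, Fin.snoc_last]

lemma cntT_eq_zero {n : ℕ} (f : Fin n → Bool) {j : ℕ} (h : cntT f j = 0)
    (i : Fin n) (hi : i.val < j) : f i = false := by
  induction j with
  | zero => omega
  | succ j ih =>
    simp only [cntT] at h
    rcases Nat.lt_or_ge i.val j with hlt | hge
    · exact ih (by omega) hlt
    · have hij : i.val = j := by omega
      rw [dif_pos (hij ▸ i.isLt)] at h
      have : (⟨j, hij ▸ i.isLt⟩ : Fin n) = i := Fin.ext hij.symm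
      rw [this] at h
      rcases Bool.eq_false_or_eq_true (f i) with hf | hf
      · simp [hf] at h
      · exact hf

lemma cntT_false {n : ℕ} (j : ℕ) : cntT (fun _ : Fin n => false) j = 0 := by
  induction j with
  | zero => rfl
  | succ j ih => simp [cntT, ih]

/-- Step-sequence counterpart of the path conditions. -/
def Ok (n b s : ℕ) (f : Fin n → Bool) : Prop :=
  cntT f n = b ∧ ∀ j ≤ n, (s + 1) * cntT f j ≤ j

def toSteps {a b : ℕ} (p : Fin (a + b + 1) → ℤ × ℤ) (i : Fin (a + b)) : Bool :=
  decide ((p i.succ - p i.castSucc).2 = 1)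

lemma pathPoint {a b : ℕ} {p : Fin (a + b + 1) → ℤ × ℤ} (hp : IsNEPath a b p) :
    ∀ j : Fin (a + b + 1),
      p j = ((j.val : ℤ) - cntT (toSteps p) j.val, (cntT (toSteps p) j.val : ℤ)) := by
  intro j
  induction j using Fin.induction with
  | zero => simpa [cntT] using hp.1
  | succ i ih =>
    have hstep := hp.2.2 i
    have hsv : (i.succ : Fin (a + b + 1)).val = i.val + 1 := rfl
    have hcv : (i.castSucc : Fin (a + b + 1)).val = i.val := rfl
    have hc : cntT (toSteps p) (i.val + 1)
        = cntT (toSteps p) i.val + (if toSteps p i then 1 else 0) := by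
      simp only [cntT]
      rw [dif_pos i.isLt]
    rcases hstep with hE | hN
    · have hts : toSteps p i = false := by
        simp only [toSteps, hE]
        norm_num
      have : p i.succ = p i.castSucc + (1, 0) := by
        have := hE
        rw [sub_eq_iff_eq_add] at this
        rw [this]; ring
      rw [this, ih, hsv, hc, hts]
      simp [Prod.ext_iff]
      all_goals (push_cast; ring)
    · have hts : toSteps p i = true := by
        simp only [toSteps, hN]
        norm_num
      have : p i.succ = p i.castSucc + (0, 1) := by
        rw [sub_eq_iff_eq_add] at hN
        rw [hN]; ring
      rw [this, ih, hsv, hc, hts]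
      simp [Prod.ext_iff]
      all_goals (push_cast; ring)

noncomputable def pathEquiv (a b s : ℕ) :
    {p : Fin (a + b + 1) → ℤ × ℤ //
      IsNEPath a b p ∧ ∀ i, (s : ℤ) * (p i).2 ≤ (p i).1} ≃
    {f : Fin (a + b) → Bool // Ok (a + b) b s f} where
  toFun := fun ⟨p, hp, hs⟩ => by
    refine ⟨toSteps p, ?_, ?_⟩
    · have h := pathPoint hp (Fin.last (a + b))
      rw [hp.2.1] at h
      have : (b : ℤ) = (cntT (toSteps p) (a + b) : ℤ) := congrArg Prod.snd h
      exact_mod_cast this.symm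
    · intro j hj
      have h := pathPoint hp ⟨j, by omega⟩
      have h2 := hs ⟨j, by omega⟩
      rw [h] at h2
      simp only at h2
      have : ((s + 1) * cntT (toSteps p) j : ℤ) ≤ (j : ℤ) := by push_cast; linarith
      exact_mod_cast this
  invFun := fun ⟨f, hf⟩ => by
    refine ⟨fun j => ((j.val : ℤ) - cntT f j.val, (cntT f j.val : ℤ)), ⟨?_, ?_, ?_⟩, ?_⟩
    · simp [cntT]
    · have hlast : (Fin.last (a + b)).val = a + b := rfl
      dsimp only
      rw [hlast, hf.1]
      simp [Prod.ext_iff]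
      all_goals (push_cast; ring)
    · intro i
      have hsv : (i.succ : Fin (a + b + 1)).val = i.val + 1 := rfl
      have hcv : (i.castSucc : Fin (a + b + 1)).val = i.val := rfl
      have hc : cntT f (i.val + 1) = cntT f i.val + (if f i then 1 else 0) := by
        simp only [cntT]
        rw [dif_pos i.isLt]
      rcases Bool.eq_false_or_eq_true (f i) with hfi | hfi
      · right
        dsimp only
        rw [hsv, hcv, hc, hfi]
        simp [Prod.ext_iff]
        all_goals (push_cast; ring)
      · left
        dsimp only
        rw [hsv, hcv, hc, hfi]
        simp [Prod.ext_iff]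
        all_goals (push_cast; ring)
    · intro j
      have h := hf.2 j.val (by omega)
      simp only
      have : ((s + 1) * cntT f j.val : ℤ) ≤ (j.val : ℤ) := by exact_mod_cast h
      push_cast at this ⊢
      linarith
  left_inv := fun ⟨p, hp, hs⟩ => by
    apply Subtype.ext
    funext j
    exact (pathPoint hp j).symm
  right_inv := fun ⟨f, hf⟩ => by
    apply Subtype.ext
    funext i
    simp only [toSteps]
    have hsv : (i.succ : Fin (a + b + 1)).val = i.val + 1 := rfl
    have hcv : (i.castSucc : Fin (a + b + 1)).val = i.val := rfl
    have hc : cntT f (i.val + 1) = cntT f i.val + (if f i then 1 else 0) := by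
      simp only [cntT]
      rw [dif_pos i.isLt]
    rcases Bool.eq_false_or_eq_true (f i) with hfi | hfi
    · rw [hfi]
      simp only [hsv, hcv, hc, hfi]
      norm_num
    · rw [hfi]
      simp only [hsv, hcv, hc, hfi]
      norm_num

noncomputable def scnt (n b s : ℕ) : ℕ := Nat.card {f : Fin n → Bool // Ok n b s f}

lemma pathCountBelow_eq (a b s : ℕ) : pathCountBelow a b s = scnt (a + b) b s :=
  Nat.card_congr (pathEquiv a b s)

lemma Ok.le {n b s : ℕ} {f : Fin n → Bool} (h : Ok n b s f) : (s + 1) * b ≤ n := by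
  have := h.2 n le_rfl
  rwa [h.1] at this

lemma scnt_eq_zero {n b s : ℕ} (h : ¬ (s + 1) * b ≤ n) : scnt n b s = 0 := by
  rw [scnt, Nat.card_eq_zero]
  left
  constructor
  rintro ⟨f, hf⟩
  exact h hf.le

lemma scnt_zero (n s : ℕ) : scnt n 0 s = 1 := by
  rw [scnt]
  have hok : Ok n 0 s (fun _ : Fin n => false) := by
    constructor
    · exact cntT_false n
    · intro j hj; simp [cntT_false]
  have hu : ∀ x : {f : Fin n → Bool // Ok n 0 s f}, x = ⟨fun _ => false, hok⟩ := by
    rintro ⟨f, hf⟩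
    apply Subtype.ext
    funext i
    exact cntT_eq_zero f hf.1 i i.isLt
  rw [Nat.card_eq_one_iff_unique]
  exact ⟨⟨fun x y => (hu x).trans (hu y).symm⟩, ⟨⟨fun _ => false, hok⟩⟩⟩

def snocSplit {n : ℕ} (Q : (Fin (n + 1) → Bool) → Prop) :
    {g : Fin (n + 1) → Bool // Q g} ≃
      {f : Fin n → Bool // Q (Fin.snoc f false)} ⊕ {f : Fin n → Bool // Q (Fin.snoc f true)} where
  toFun := fun ⟨g, hg⟩ =>
    if hx : g (Fin.last n) = true then
      Sum.inr ⟨Fin.init g, by rw [← hx, Fin.snoc_init_self]; exact hg⟩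
    else
      Sum.inl ⟨Fin.init g, by
        rw [show false = g (Fin.last n) from (Bool.not_eq_true _ |>.mp hx).symm,
          Fin.snoc_init_self]; exact hg⟩
  invFun := fun x => match x with
    | Sum.inl ⟨f, h⟩ => ⟨Fin.snoc f false, h⟩
    | Sum.inr ⟨f, h⟩ => ⟨Fin.snoc f true, h⟩
  left_inv := fun ⟨g, hg⟩ => by
    dsimp only
    by_cases hx : g (Fin.last n) = true
    · rw [dif_pos hx]
      apply Subtype.ext
      simp only
      rw [← hx, Fin.snoc_init_self]
    · rw [dif_neg hx]
      apply Subtype.ext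
      simp only
      rw [show false = g (Fin.last n) from (Bool.not_eq_true _ |>.mp hx).symm,
        Fin.snoc_init_self]
  right_inv := fun x => by
    match x with
    | Sum.inl ⟨f, h⟩ =>
      simp only [Fin.snoc_last]
      rw [dif_neg (by simp)]
      simp [Fin.init_snoc]
    | Sum.inr ⟨f, h⟩ =>
      simp only [Fin.snoc_last]
      rw [dif_pos (by simp)]
      simp [Fin.init_snoc]

lemma ok_snoc_false {n c s : ℕ} (f : Fin n → Bool) :
    Ok (n + 1) c s (Fin.snoc f false) ↔ Ok n c s f ∧ (s + 1) * c ≤ n + 1 := by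
  have htop : cntT (Fin.snoc f false) (n + 1) = cntT f n := by
    rw [cntT_snoc_top]; simp
  constructor
  · rintro ⟨h1, h2⟩
    rw [htop] at h1
    refine ⟨⟨h1, fun j hj => ?_⟩, ?_⟩
    · have := h2 j (by omega)
      rwa [cntT_snoc_of_le f false hj] at this
    · have := h2 (n + 1) le_rfl
      rwa [htop, h1] at this
  · rintro ⟨⟨h1, h2⟩, h3⟩
    refine ⟨by rw [htop]; exact h1, fun j hj => ?_⟩
    rcases Nat.lt_or_ge j (n + 1) with hlt | hge
    · rw [cntT_snoc_of_le f false (by omega)]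
      exact h2 j (by omega)
    · have hj1 : j = n + 1 := by omega
      rw [hj1, htop, h1]
      exact h3
  
lemma ok_snoc_true {n c s : ℕ} (f : Fin n → Bool) :
    Ok (n + 1) (c + 1) s (Fin.snoc f true) ↔ Ok n c s f ∧ (s + 1) * (c + 1) ≤ n + 1 := by
  have htop : cntT (Fin.snoc f true) (n + 1) = cntT f n + 1 := by
    rw [cntT_snoc_top]; simp
  constructor
  · rintro ⟨h1, h2⟩
    rw [htop] at h1
    have h1' : cntT f n = c := by omega
    refine ⟨⟨h1', fun j hj => ?_⟩, ?_⟩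
    · have := h2 j (by omega)
      rwa [cntT_snoc_of_le f true hj] at this
    · have := h2 (n + 1) le_rfl
      rwa [htop, h1'] at this
  · rintro ⟨⟨h1, h2⟩, h3⟩
    refine ⟨by rw [htop, h1], fun j hj => ?_⟩
    rcases Nat.lt_or_ge j (n + 1) with hlt | hge
    · rw [cntT_snoc_of_le f true (by omega)]
      exact h2 j (by omega)
    · have hj1 : j = n + 1 := by omega
      rw [hj1, htop, h1]
      exact h3

lemma scnt_succ {n b s : ℕ} (h : (s + 1) * (b + 1) ≤ n + 1) :
    scnt (n + 1) (b + 1) s = scnt n (b + 1) s + scnt n b s := by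
  rw [scnt, Nat.card_congr (snocSplit (Ok (n + 1) (b + 1) s)), Nat.card_sum]
  congr 1
  · rw [scnt]
    apply Nat.card_congr
    apply Equiv.subtypeEquivRight
    intro f
    rw [ok_snoc_false]
    exact ⟨fun ⟨h1, _⟩ => h1, fun h1 => ⟨h1, h⟩⟩
  · rw [scnt]
    apply Nat.card_congr
    apply Equiv.subtypeEquivRight
    intro f
    rw [ok_snoc_true]
    exact ⟨fun ⟨h1, _⟩ => h1, fun h1 => ⟨h1, h⟩⟩

lemma scnt_formula (s : ℕ) : ∀ b n, (s + 1) * b ≤ n →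
    (scnt n b s : ℤ) = (n.choose b : ℤ)
      - s * (if b = 0 then 0 else (n.choose (b - 1) : ℤ)) := by
  intro b
  induction b with
  | zero => intro n _; simp [scnt_zero]
  | succ b ihb =>
    intro n
    induction n with
    | zero =>
      intro h
      exfalso
      have : 0 < (s + 1) * (b + 1) := Nat.mul_pos (Nat.succ_pos s) (Nat.succ_pos b)
      omega
    | succ M ihn =>
      intro h
      rw [scnt_succ h]
      have h' : (s + 1) * b + (s + 1) ≤ M + 1 := by
        calc (s + 1) * b + (s + 1) = (s + 1) * (b + 1) := by ring
        _ ≤ M + 1 := h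
      have hMb : (s + 1) * b ≤ M := by omega
      have e1 := ihb M hMb
      have pas1 : (((M + 1).choose (b + 1) : ℕ) : ℤ)
          = (M.choose b : ℤ) + (M.choose (b + 1) : ℤ) := by
        exact_mod_cast Nat.choose_succ_succ M b
      simp only [if_neg (Nat.succ_ne_zero b), Nat.succ_sub_one, Nat.add_sub_cancel]
      rcases Nat.lt_or_ge M ((s + 1) * (b + 1)) with hge | hlt
      · -- boundary case : M + 1 = (s+1)*(b+1)
        have heq : (s + 1) * (b + 1) = M + 1 := le_antisymm h hge
        have hMe : s * b + s + b + 1 = M + 1 := by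
          calc s * b + s + b + 1 = (s + 1) * (b + 1) := by ring
          _ = M + 1 := heq
        have hz : scnt M (b + 1) s = 0 := scnt_eq_zero (by omega)
        have hsub : M - b = s * (b + 1) := by
          have : s * (b + 1) = s * b + s := by ring
          omega
        have key0 : M.choose (b + 1) * (b + 1) = (s * M.choose b) * (b + 1) := by
          rw [Nat.choose_succ_right_eq M b, hsub]; ring
        have key : (M.choose (b + 1) : ℤ) = s * (M.choose b : ℤ) := by
          have h2 : (M.choose (b + 1) : ℤ) * (b + 1)
              = ((s : ℤ) * (M.choose b : ℤ)) * (b + 1) := by exact_mod_cast key0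
          exact mul_right_cancel₀ (by positivity) h2
        rw [hz]
        cases b with
        | zero =>
          have hsc := scnt_zero M s
          have c0 : (M.choose 0 : ℤ) = 1 := by simp
          have c1 : ((M + 1).choose 0 : ℤ) = 1 := by simp
          rw [c0] at key
          push_cast [hsc, pas1, c1, key]
          rw [c0]; ring
        | succ c =>
          simp only [if_neg (Nat.succ_ne_zero c), Nat.succ_sub_one] at e1
          have pas2 : (((M + 1).choose (c + 1) : ℕ) : ℤ)
              = (M.choose c : ℤ) + (M.choose (c + 1) : ℤ) := by
            exact_mod_cast Nat.choose_succ_succ M c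
          push_cast [e1, pas1, pas2]
          linarith [key]
      · have e2 := ihn hlt
        simp only [if_neg (Nat.succ_ne_zero b), Nat.succ_sub_one, Nat.add_sub_cancel] at e2
        cases b with
        | zero =>
          simp only [if_pos rfl, mul_zero, sub_zero] at e1
          have c1 : ((M + 1).choose 0 : ℤ) = 1 := by simp
          have c2 : (M.choose 0 : ℤ) = 1 := by simp
          push_cast [e1, e2, pas1, c1, c2]
          ring
        | succ c =>
          simp only [if_neg (Nat.succ_ne_zero c), Nat.succ_sub_one] at e1
          have pas2 : (((M + 1).choose (c + 1) : ℕ) : ℤ)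
              = (M.choose c : ℤ) + (M.choose (c + 1) : ℤ) := by
            exact_mod_cast Nat.choose_succ_succ M c
          push_cast [e1, e2, pas1, pas2]
          ring


/-- Double twist knots `K(p+1,2)` at framing `f = 0`: the number of NE lattice paths
from `(0,0)` to `((2p+5)k + 2p + 1, k)` staying weakly below `y = x/(2p+5)` equals
the Raney number `R_{2p+6, 2p+2}(k) = ((2p+2)/((2p+6)k + 2p+2)) C((2p+6)k + 2p+2, k)`,
stated multiplicatively. -/
theorem double_twist_knot_framing_zero_path_count (p k : ℕ) (hp : 1 ≤ p) :
    ((2 * p + 6) * k + 2 * p + 2) * pathCountBelow ((2 * p + 5) * k + 2 * p + 1) k (2 * p + 5) =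
      (2 * p + 2) * Nat.choose ((2 * p + 6) * k + 2 * p + 2) k := by
  cases k with
  | zero =>
    rw [pathCountBelow_eq]
    simp [scnt_zero]
  | succ c =>
    have hn2 : (2 * p + 5) * (c + 1) + 2 * p + 1 + (c + 1) = (2 * p + 6) * (c + 1) + 2 * p + 1 := by
      ring
    rw [pathCountBelow_eq, hn2]
    have hle : (2 * p + 5 + 1) * (c + 1) ≤ (2 * p + 6) * (c + 1) + 2 * p + 1 := by
      calc (2 * p + 5 + 1) * (c + 1) = (2 * p + 6) * (c + 1) := by norm_num
        _ ≤ (2 * p + 6) * (c + 1) + (2 * p + 1) := Nat.le_add_right _ _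
        _ = (2 * p + 6) * (c + 1) + 2 * p + 1 := (add_assoc _ _ _).symm
    have hform := scnt_formula (2 * p + 5) (c + 1) ((2 * p + 6) * (c + 1) + 2 * p + 1) hle
    simp only [if_neg (Nat.succ_ne_zero c), Nat.succ_sub_one, Nat.add_sub_cancel] at hform
    set n := (2 * p + 6) * (c + 1) + 2 * p + 1 with hn
    have hkey : n + 1 = (2 * p + 6) * (c + 1) + 2 * p + 2 := by rw [hn]
    have f1 : ((n : ℤ) + 1) * (n.choose c : ℤ) = ((n + 1).choose (c + 1) : ℤ) * ((c : ℤ) + 1) := by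
      exact_mod_cast Nat.add_one_mul_choose_eq n c
    have f2 : (((n + 1).choose (c + 1) : ℕ) : ℤ) = (n.choose c : ℤ) + (n.choose (c + 1) : ℤ) := by
      exact_mod_cast Nat.choose_succ_succ n c
    have hkeyZ : ((n : ℤ) + 1) = (2 * (p : ℤ) + 6) * ((c : ℤ) + 1) + (2 * (p : ℤ) + 2) := by
      rw [hn]; push_cast; ring
    push_cast at hform
    have goalZ : ((n : ℤ) + 1) * (scnt n (c + 1) (2 * p + 5) : ℤ)
        = (2 * (p : ℤ) + 2) * (((n + 1).choose (c + 1) : ℕ) : ℤ) := by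
      linear_combination ((n : ℤ) + 1) * hform - ((n : ℤ) + 1) * f2
        - (2 * (p : ℤ) + 6) * f1 + (((n + 1).choose (c + 1) : ℕ) : ℤ) * hkeyZ
    have final : ((2 * p + 6) * (c + 1) + 2 * p + 2) * scnt n (c + 1) (2 * p + 5)
        = (2 * p + 2) * ((2 * p + 6) * (c + 1) + 2 * p + 2).choose (c + 1) := by
      rw [← hkey]
      exact_mod_cast goalZ
    exact final
end
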